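/- arXiv:1604.00738 — 3 statements merged into one kernel-verified Lean document; each statement's English description precedes it below -/
import Mathlib

section
/- The number fields K₁ = ℚ[x]/(x^4 - 4x^3 + 46x^2 - 148x + 1369) and K₂ = ℚ[x]/(x^4 + 4x^3 + 6x^2 + 164x + 1681) are linearly disjoint over ℚ; equivalently, since both have degree 4, any field embeddable into both K₁ and K₂ equals ℚ. -/
/-!
A field `F` embedding into `K₁` has degree 1, 2 or 4 over `ℚ`. In degree 2, `F = ℚ(√q)` for a
non-square `q ∈ ℚ`; in degree 4, `F ≅ K₁`, which contains `√2`. Either way a non-square rational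
becomes a square in both `K₁` and `K₂`. Writing a square root of `q ∈ ℚ` in the power basis
`1, θ, θ², θ³` and eliminating the coordinates shows that `q` or `2q` is a rational square when
the root lies in `K₁`, and `q` or `5q` when it lies in `K₂`. Together these force `q` to be a
square, since `10` is not.
-/

open Polynomial

/-- `K₁ = ℚ[x]/(x⁴ - 4x³ + 46x² - 148x + 1369)`. -/
noncomputable def KFrob37 : Type :=
  AdjoinRoot ((X : Polynomial ℚ) ^ 4 - 4 * X ^ 3 + 46 * X ^ 2 - 148 * X + C 1369)

/-- `K₂ = ℚ[x]/(x⁴ + 4x³ + 6x² + 164x + 1681)`. -/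
noncomputable def KFrob41 : Type :=
  AdjoinRoot ((X : Polynomial ℚ) ^ 4 + 4 * X ^ 3 + 6 * X ^ 2 + 164 * X + C 1681)

noncomputable instance : CommRing KFrob37 :=
  inferInstanceAs (CommRing (AdjoinRoot _))
noncomputable instance : CommRing KFrob41 :=
  inferInstanceAs (CommRing (AdjoinRoot _))
noncomputable instance : Algebra ℚ KFrob37 :=
  inferInstanceAs (Algebra ℚ (AdjoinRoot _))
noncomputable instance : Algebra ℚ KFrob41 :=
  inferInstanceAs (Algebra ℚ (AdjoinRoot _))

open Module

theorem AlgHom.finrank_dvd_finrank {K F L : Type*} [Field K] [Field F] [CommRing L]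
    [Algebra K F] [Algebra K L] (φ : F →ₐ[K] L) : finrank K F ∣ finrank K L := by
  let := φ.toRingHom.toAlgebra
  have : IsScalarTower K F L := .of_algebraMap_eq fun r ↦ (φ.commutes r).symm
  exact finrank_dvd_finrank_right K F L

theorem AlgHom.bijective_of_finrank_eq {K F L : Type*} [Field K] [Field F] [Ring L]
    [Nontrivial L] [Algebra K F] [Algebra K L] [FiniteDimensional K L] (φ : F →ₐ[K] L)
    (h : finrank K F = finrank K L) : Function.Bijective φ := by
  have : FiniteDimensional K F := finite_of_finrank_pos (h ▸ finrank_pos)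
  exact ⟨φ.injective,
    (LinearMap.injective_iff_surjective_of_finrank_eq_finrank (f := φ.toLinearMap) h).mp
      φ.injective⟩

theorem mem_range_algebraMap_of_sq_add_mul_add_eq_zero {K L : Type*} [Field K]
    [NeZero (2 : K)] [Field L] [Algebra K L] {x : L} {b c : K}
    (hx : x ^ 2 + algebraMap K L b * x + algebraMap K L c = 0) (hd : IsSquare (b ^ 2 - 4 * c)) :
    x ∈ (algebraMap K L).range := by
  obtain ⟨r, hr⟩ := hd
  have hr' := congrArg (algebraMap K L) hr
  simp only [map_sub, map_mul, map_pow, map_ofNat] at hr'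
  have hprod : (2 * x + algebraMap K L b - algebraMap K L r)
      * (2 * x + algebraMap K L b + algebraMap K L r) = 0 := by
    linear_combination 4 * hx + hr'
  obtain ⟨s, hs⟩ : ∃ s : K, 2 * x + algebraMap K L b = algebraMap K L s := by
    rcases mul_eq_zero.mp hprod with h | h
    · exact ⟨r, by linear_combination h⟩
    · exact ⟨-r, by rw [map_neg]; linear_combination h⟩
  have h2 : (2 : L) ≠ 0 := by
    rw [← map_ofNat (algebraMap K L) 2]
    exact (_root_.map_ne_zero _).mpr two_ne_zero
  refine ⟨(s - b) / 2, ?_⟩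
  rw [map_div₀, map_sub, map_ofNat, ← hs]
  field_simp
  ring

theorem exists_not_isSquare_isSquare_algebraMap_of_finrank_eq_two {K L : Type*} [Field K]
    [NeZero (2 : K)] [Field L] [Algebra K L] (h : finrank K L = 2) :
    ∃ q : K, ¬ IsSquare q ∧ IsSquare (algebraMap K L q) := by
  have : FiniteDimensional K L := finite_of_finrank_pos (by omega)
  obtain ⟨x, hx⟩ : ∃ x : L, x ∉ (algebraMap K L).range := by
    by_contra! hall
    have : (⊥ : Subalgebra K L) = ⊤ := eq_top_iff.mpr fun x _ ↦ by
      obtain ⟨r, rfl⟩ := hall x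
      exact Subalgebra.algebraMap_mem _ r
    rw [Subalgebra.bot_eq_top_iff_finrank_eq_one] at this
    omega
  have hint := Algebra.IsIntegral.isIntegral (R := K) x
  have hdeg : (minpoly K x).natDegree = 2 := by
    have := minpoly.natDegree_le (A := K) x
    have := minpoly.natDegree_pos hint
    have := minpoly.natDegree_eq_one_iff.not.mpr hx
    omega
  set b := (minpoly K x).coeff 1
  set c := (minpoly K x).coeff 0
  have hx2 : x ^ 2 + algebraMap K L b * x + algebraMap K L c = 0 := by
    have hmonic : (minpoly K x).coeff 2 = 1 := hdeg ▸ (minpoly.monic hint).coeff_natDegree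
    have := minpoly.aeval K x
    simp only [aeval_eq_sum_range, hdeg, Finset.sum_range_succ, Finset.sum_range_zero,
      Algebra.smul_def, hmonic, map_one] at this
    linear_combination this
  refine ⟨b ^ 2 - 4 * c, fun hd ↦ hx (mem_range_algebraMap_of_sq_add_mul_add_eq_zero hx2 hd),
    2 * x + algebraMap K L b, ?_⟩
  simp only [map_sub, map_pow, map_mul, map_ofNat]
  linear_combination (-4) * hx2

namespace PowerBasis

variable {K S : Type*} [Field K] [CommRing S] [Algebra K S] (pb : PowerBasis K S)

theorem exists_eq_cubic (hdim : pb.dim = 4) (z : S) :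
    ∃ a b c d : K, z = algebraMap K S a + algebraMap K S b * pb.gen
      + algebraMap K S c * pb.gen ^ 2 + algebraMap K S d * pb.gen ^ 3 := by
  have : Nontrivial S := nontrivial_of_finrank_pos (R := K) (by simp [pb.finrank, hdim])
  obtain ⟨f, hf, rfl⟩ := pb.exists_eq_aeval z
  refine ⟨f.coeff 0, f.coeff 1, f.coeff 2, f.coeff 3, ?_⟩
  rw [aeval_eq_sum_range' (hdim ▸ hf)]
  simp only [Finset.sum_range_succ, Finset.sum_range_zero, Algebra.smul_def]
  ring

theorem cubic_eq_zero (hdim : pb.dim = 4) {a b c d : K}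
    (h : algebraMap K S a + algebraMap K S b * pb.gen
      + algebraMap K S c * pb.gen ^ 2 + algebraMap K S d * pb.gen ^ 3 = 0) :
    a = 0 ∧ b = 0 ∧ c = 0 ∧ d = 0 := by
  set f : K[X] := C a + C b * X + C c * X ^ 2 + C d * X ^ 3
  have hf : f = 0 := by
    by_contra hne
    have hle := minpoly.degree_le_of_ne_zero K pb.gen hne (by simpa [f, Algebra.smul_def] using h)
    rw [pb.degree_minpoly, hdim] at hle
    have : f.degree ≤ 3 := by simp only [f]; compute_degree
    exact absurd (hle.trans this) (by decide)
  have hcoeff (n : ℕ) : f.coeff n = 0 := by rw [hf, coeff_zero]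
  exact ⟨by simpa [f] using hcoeff 0, by simpa [f] using hcoeff 1,
    by simpa [f] using hcoeff 2, by simpa [f] using hcoeff 3⟩

end PowerBasis

namespace KFrob37

theorem monic : ((X : ℚ[X]) ^ 4 - 4 * X ^ 3 + 46 * X ^ 2 - 148 * X + C 1369).Monic := by
  monicity!

noncomputable def powerBasis : PowerBasis ℚ KFrob37 := AdjoinRoot.powerBasis' monic

theorem powerBasis_dim : powerBasis.dim = 4 := by
  rw [powerBasis, AdjoinRoot.powerBasis'_dim]
  compute_degree!

theorem finrank_eq_four : finrank ℚ KFrob37 = 4 :=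
  powerBasis.finrank.trans powerBasis_dim

instance : FiniteDimensional ℚ KFrob37 := powerBasis.finite

instance : Nontrivial KFrob37 :=
  nontrivial_of_finrank_pos (R := ℚ) (finrank_eq_four ▸ Nat.succ_pos 3)

theorem gen_pow_four :
    powerBasis.gen ^ 4 = 4 * powerBasis.gen ^ 3 - 46 * powerBasis.gen ^ 2
      + 148 * powerBasis.gen - 1369 := by
  have h : aeval powerBasis.gen
      ((X : ℚ[X]) ^ 4 - 4 * X ^ 3 + 46 * X ^ 2 - 148 * X + C 1369) = 0 :=
    (AdjoinRoot.aeval_eq _).trans AdjoinRoot.mk_self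
  simp only [map_add, map_sub, map_mul, map_pow, aeval_X, map_ofNat] at h
  linear_combination h

theorem coords_resultant_eq_zero {a b c d : ℚ} (hd : d ≠ 0)
    (h1 : 2*a*b + 148*c^2 + 296*b*d - 1554*c*d - 9916*d^2 = 0)
    (h2 : b^2 + 2*a*c - 46*c^2 - 92*b*d - 72*c*d + 603*d^2 = 0)
    (h3 : 2*a*d + 2*b*c + 4*c^2 + 8*b*d - 60*c*d - 156*d^2 = 0) :
    (c + 4*d) * (c^2 - 22*c*d - 67*d^2) = 0 := by
  have hP : 0 < c^4 + 12*c^3*d + 94*c^2*d^2 + 284*c*d^3 + 1513*d^4 := by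
    have hd2 : 0 < d^2 := by positivity
    nlinarith [sq_nonneg (c^2 + 6*c*d + 10*d^2), sq_nonneg (d*(19*c + 41*d)), mul_pos hd2 hd2]
  -- Eliminating `a` and `b` leaves this multiple of the resultant in `c, d`.
  have key : (-512) * d^2 * (c^4 + 12*c^3*d + 94*c^2*d^2 + 284*c*d^3 + 1513*d^4)
      * ((c + 4*d) * (c^2 - 22*c*d - 67*d^2)) = 0 := by
    linear_combination
      (d^2*((-169104)*d^5 + (-109608)*c*d^4 + (-22344)*c^2*d^3 + (-2392)*c^3*d^2
        + (-168)*c^4*d + 2272*b*d^4 + 2072*b*c*d^3 + 664*b*c^2*d^2 + 104*b*c^3*d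
        + 8*b*c^4)) * h2
      + (d^2*((-31220)*d^5 + (-19244)*c*d^4 + (-4956)*c^2*d^3 + (-1036)*c^3*d^2
        + (-112)*c^4*d + (-8)*c^5 + 284*b*d^4 + 188*b*c*d^3 + 36*b*c^2*d^2
        + 4*b*c^3*d)) * h1
      - (d*((-169104)*c*d^5 + (-109608)*c^2*d^4 + (-22344)*c^3*d^3 + (-2392)*c^4*d^2
        + (-168)*c^5*d + (-31220)*b*d^5 + (-16972)*b*c*d^4 + (-2884)*b*c^2*d^3
        + (-372)*b*c^3*d^2 + (-8)*b*c^4*d + 284*b^2*d^4 + 188*b^2*c*d^3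
        + 36*b^2*c^2*d^2 + 4*b^2*c^3*d)) * h3
  simpa [hd, hP.ne'] using key

/- The left-hand sides of `h0`, ..., `h3` are the coordinates of `(a + bθ + cθ² + dθ³)²` in the
basis `1, θ, θ², θ³`. -/
theorem isSquare_or_isSquare_two_mul_of_coords {a b c d q : ℚ}
    (h0 : a^2 - 1369*c^2 - 2738*b*d - 10952*c*d + 41070*d^2 = q)
    (h1 : 2*a*b + 148*c^2 + 296*b*d - 1554*c*d - 9916*d^2 = 0)
    (h2 : b^2 + 2*a*c - 46*c^2 - 92*b*d - 72*c*d + 603*d^2 = 0)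
    (h3 : 2*a*d + 2*b*c + 4*c^2 + 8*b*d - 60*c*d - 156*d^2 = 0) :
    IsSquare q ∨ IsSquare (2 * q) := by
  rcases eq_or_ne d 0 with rfl | hd
  · have hc : c = 0 := by
      have : 64 * c^3 = 0 := by linear_combination c*h1 + 2*c*h2 - (a + b - 2*c)*h3
      simpa using this
    subst hc
    have hb : b = 0 := by simpa using h2
    exact Or.inl ⟨a, by rw [← h0, hb]; ring⟩
  rcases mul_eq_zero.mp (coords_resultant_eq_zero hd h1 h2 h3) with hc | hc
  · have hc : c = -4*d := by linear_combination hc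
    subst hc
    have hb : b = 9*d := by
      have : 148*d^2*(b - 9*d) = 0 := by linear_combination d*h1 - b*h3
      simpa [hd, sub_eq_zero] using this
    subst hb
    have ha : a = -74*d := by
      have : 2*d*(a + 74*d) = 0 := by linear_combination h3
      simpa [hd, add_eq_zero_iff_eq_neg] using this
    exact Or.inr ⟨296*d, by rw [← h0, ha]; ring⟩
  · have : IsSquare (188 : ℚ) := ⟨(c - 11*d)/d, by field_simp; linear_combination -hc⟩
    norm_num at this

theorem isSquare_or_isSquare_two_mul {q : ℚ} (h : IsSquare (algebraMap ℚ KFrob37 q)) :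
    IsSquare q ∨ IsSquare (2 * q) := by
  obtain ⟨z, hz⟩ := h
  obtain ⟨a, b, c, d, rfl⟩ := powerBasis.exists_eq_cubic powerBasis_dim z
  set ι := algebraMap ℚ KFrob37
  set θ := powerBasis.gen
  have hcoords : ι (a^2 - 1369*c^2 - 2738*b*d - 10952*c*d + 41070*d^2 - q)
      + ι (2*a*b + 148*c^2 + 296*b*d - 1554*c*d - 9916*d^2) * θ
      + ι (b^2 + 2*a*c - 46*c^2 - 92*b*d - 72*c*d + 603*d^2) * θ ^ 2
      + ι (2*a*d + 2*b*c + 4*c^2 + 8*b*d - 60*c*d - 156*d^2) * θ ^ 3 = 0 := by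
    simp only [map_add, map_sub, map_mul, map_pow, map_ofNat]
    linear_combination -hz - (ι c ^ 2 + 8 * ι c * ι d + 2 * ι b * ι d - 30 * ι d ^ 2
      + (4 * ι d ^ 2 + 2 * ι c * ι d) * θ + ι d ^ 2 * θ ^ 2) * gen_pow_four
  obtain ⟨h0, h1, h2, h3⟩ := powerBasis.cubic_eq_zero powerBasis_dim hcoords
  exact isSquare_or_isSquare_two_mul_of_coords (by linear_combination h0) h1 h2 h3

theorem isSquare_algebraMap_two : IsSquare (algebraMap ℚ KFrob37 2) := by
  set θ := powerBasis.gen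
  have hsq : (-θ^3 + 4*θ^2 - 9*θ + 74) * (-θ^3 + 4*θ^2 - 9*θ + 74) = 43808 := by
    linear_combination (θ^2 - 4*θ - 28) * gen_pow_four
  refine ⟨algebraMap ℚ KFrob37 148⁻¹ * (-θ^3 + 4*θ^2 - 9*θ + 74), ?_⟩
  rw [show (2 : ℚ) = 148⁻¹ * 148⁻¹ * 43808 by norm_num, map_mul, map_mul, map_ofNat, ← hsq]
  ring

end KFrob37

namespace KFrob41

theorem monic : ((X : ℚ[X]) ^ 4 + 4 * X ^ 3 + 6 * X ^ 2 + 164 * X + C 1681).Monic := by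
  monicity!

noncomputable def powerBasis : PowerBasis ℚ KFrob41 := AdjoinRoot.powerBasis' monic

theorem powerBasis_dim : powerBasis.dim = 4 := by
  rw [powerBasis, AdjoinRoot.powerBasis'_dim]
  compute_degree!

theorem gen_pow_four :
    powerBasis.gen ^ 4 = -4 * powerBasis.gen ^ 3 - 6 * powerBasis.gen ^ 2
      - 164 * powerBasis.gen - 1681 := by
  have h : aeval powerBasis.gen
      ((X : ℚ[X]) ^ 4 + 4 * X ^ 3 + 6 * X ^ 2 + 164 * X + C 1681) = 0 :=
    (AdjoinRoot.aeval_eq _).trans AdjoinRoot.mk_self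
  simp only [map_add, map_mul, map_pow, aeval_X, map_ofNat] at h
  linear_combination h

theorem coords_resultant_eq_zero {a b c d : ℚ} (hd : d ≠ 0)
    (h1 : 2*a*b - 164*c^2 - 328*b*d - 2050*c*d + 5084*d^2 = 0)
    (h2 : b^2 + 2*a*c - 6*c^2 - 12*b*d - 280*c*d - 1085*d^2 = 0)
    (h3 : 2*a*d + 2*b*c - 4*c^2 - 8*b*d + 20*c*d - 180*d^2 = 0) :
    (c - 4*d) * (c^2 + 14*c*d - 31*d^2) = 0 := by
  have hP : 0 < c^4 - 12*c^3*d + 54*c^2*d^2 + 52*c*d^3 + 1121*d^4 := by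
    have hd2 : 0 < d^2 := by positivity
    nlinarith [sq_nonneg (c^2 - 6*c*d + 5*d^2), sq_nonneg (d*(c + 7*d)), mul_pos hd2 hd2]
  have key : 1280 * d^2 * (c^4 - 12*c^3*d + 54*c^2*d^2 + 52*c*d^3 + 1121*d^4)
      * ((c - 4*d) * (c^2 + 14*c*d - 31*d^2)) = 0 := by
    linear_combination
      (d^2*((-102416)*d^5 + 71912*c*d^4 + (-8968)*c^2*d^3 + (-200)*c^3*d^2
        + (-8)*c^4*d + (-416)*b*d^4 + (-760)*b*c*d^3 + 504*b*c^2*d^2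
        + (-104)*b*c^3*d + 8*b*c^4)) * h2
      + (d^2*(13140*d^5 + (-4300)*c*d^4 + 1036*c^2*d^3 + (-636)*c^3*d^2 + 112*c^4*d
        + (-8)*c^5 + 52*b*d^4 + 108*b*c*d^3 + (-36)*b*c^2*d^2 + 4*b*c^3*d)) * h1
      - (d*((-102416)*c*d^5 + 71912*c^2*d^4 + (-8968)*c^3*d^3 + (-200)*c^4*d^2
        + (-8)*c^5*d + 13140*b*d^5 + (-4716)*b*c*d^4 + 276*b*c^2*d^3
        + (-132)*b*c^3*d^2 + 8*b*c^4*d + 52*b^2*d^4 + 108*b^2*c*d^3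
        + (-36)*b^2*c^2*d^2 + 4*b^2*c^3*d)) * h3
  simpa [hd, hP.ne'] using key

theorem isSquare_or_isSquare_five_mul_of_coords {a b c d q : ℚ}
    (h0 : a^2 - 1681*c^2 - 3362*b*d + 13448*c*d - 16810*d^2 = q)
    (h1 : 2*a*b - 164*c^2 - 328*b*d - 2050*c*d + 5084*d^2 = 0)
    (h2 : b^2 + 2*a*c - 6*c^2 - 12*b*d - 280*c*d - 1085*d^2 = 0)
    (h3 : 2*a*d + 2*b*c - 4*c^2 - 8*b*d + 20*c*d - 180*d^2 = 0) :
    IsSquare q ∨ IsSquare (5 * q) := by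
  rcases eq_or_ne d 0 with rfl | hd
  · have hc : c = 0 := by
      have : -160 * c^3 = 0 := by linear_combination c*h1 - 2*c*h2 + (-a + b + 2*c)*h3
      simpa using this
    subst hc
    have hb : b = 0 := by simpa using h2
    exact Or.inl ⟨a, by rw [← h0, hb]; ring⟩
  rcases mul_eq_zero.mp (coords_resultant_eq_zero hd h1 h2 h3) with hc | hc
  · have hc : c = 4*d := by linear_combination hc
    subst hc
    have hb : b = -35*d := by
      have : -164*d^2*(b + 35*d) = 0 := by linear_combination d*h1 - b*h3
      simpa [hd, add_eq_zero_iff_eq_neg] using this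
    subst hb
    have ha : a = 82*d := by
      have : 2*d*(a - 82*d) = 0 := by linear_combination h3
      simpa [hd, sub_eq_zero] using this
    exact Or.inr ⟨820*d, by rw [← h0, ha]; ring⟩
  · have : IsSquare (80 : ℚ) := ⟨(c + 7*d)/d, by field_simp; linear_combination -hc⟩
    norm_num at this

theorem isSquare_or_isSquare_five_mul {q : ℚ} (h : IsSquare (algebraMap ℚ KFrob41 q)) :
    IsSquare q ∨ IsSquare (5 * q) := by
  obtain ⟨z, hz⟩ := h
  obtain ⟨a, b, c, d, rfl⟩ := powerBasis.exists_eq_cubic powerBasis_dim z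
  set ι := algebraMap ℚ KFrob41
  set θ := powerBasis.gen
  have hcoords : ι (a^2 - 1681*c^2 - 3362*b*d + 13448*c*d - 16810*d^2 - q)
      + ι (2*a*b - 164*c^2 - 328*b*d - 2050*c*d + 5084*d^2) * θ
      + ι (b^2 + 2*a*c - 6*c^2 - 12*b*d - 280*c*d - 1085*d^2) * θ ^ 2
      + ι (2*a*d + 2*b*c - 4*c^2 - 8*b*d + 20*c*d - 180*d^2) * θ ^ 3 = 0 := by
    simp only [map_add, map_sub, map_mul, map_pow, map_ofNat]
    linear_combination -hz - (ι c ^ 2 - 8 * ι c * ι d + 2 * ι b * ι d + 10 * ι d ^ 2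
      + (-4 * ι d ^ 2 + 2 * ι c * ι d) * θ + ι d ^ 2 * θ ^ 2) * gen_pow_four
  obtain ⟨h0, h1, h2, h3⟩ := powerBasis.cubic_eq_zero powerBasis_dim hcoords
  exact isSquare_or_isSquare_five_mul_of_coords (by linear_combination h0) h1 h2 h3

end KFrob41

theorem isSquare_of_isSquare_algebraMap_KFrob37_KFrob41 {q : ℚ}
    (h₁ : IsSquare (algebraMap ℚ KFrob37 q)) (h₂ : IsSquare (algebraMap ℚ KFrob41 q)) :
    IsSquare q := by
  rcases KFrob37.isSquare_or_isSquare_two_mul h₁ with hq | ⟨r, hr⟩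
  · exact hq
  rcases KFrob41.isSquare_or_isSquare_five_mul h₂ with hq | ⟨s, hs⟩
  · exact hq
  rcases eq_or_ne q 0 with rfl | hq0
  · exact IsSquare.zero
  have : IsSquare (10 : ℚ) :=
    ⟨r * s / q, by field_simp; linear_combination 5 * q * hr + r * r * hs⟩
  norm_num at this

/-- The quartic fields `K₁` and `K₂` are linearly disjoint over `ℚ`: any field `F`
admitting `ℚ`-algebra embeddings into both `K₁` and `K₂` equals `ℚ`
(i.e. has degree 1 over `ℚ`). -/
theorem KFrob37_KFrob41_linearly_disjoint :
    ∀ (F : Type) [Field F] [Algebra ℚ F],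
      Nonempty (F →ₐ[ℚ] KFrob37) → Nonempty (F →ₐ[ℚ] KFrob41) →
        Module.finrank ℚ F = 1 := by
  rintro F _ _ ⟨φ⟩ ⟨ψ⟩
  have hdvd : finrank ℚ F ∣ 4 := KFrob37.finrank_eq_four ▸ φ.finrank_dvd_finrank
  by_contra hne
  obtain ⟨q, hq, hsq⟩ : ∃ q : ℚ, ¬ IsSquare q ∧ IsSquare (algebraMap ℚ F q) := by
    have : finrank ℚ F = 2 ∨ finrank ℚ F = 4 := by
      have := Nat.le_of_dvd (by norm_num) hdvd
      interval_cases h : finrank ℚ F <;> simp_all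
    rcases this with h2 | h4
    · exact exists_not_isSquare_isSquare_algebraMap_of_finrank_eq_two h2
    · let e := AlgEquiv.ofBijective φ
        (φ.bijective_of_finrank_eq (h4.trans KFrob37.finrank_eq_four.symm))
      exact ⟨2, by norm_num, e.symm.commutes 2 ▸ KFrob37.isSquare_algebraMap_two.map e.symm⟩
  exact hq (isSquare_of_isSquare_algebraMap_KFrob37_KFrob41
    (φ.commutes q ▸ hsq.map φ) (ψ.commutes q ▸ hsq.map ψ))
end

section
/- The rational map φ₁ from the genus 2 curve C: y² = -96393(13x+12)(7x-13)(107x²-273x+252)(56x²+104x+31) to the elliptic curve E₁: y₁² = x₁³ + 5805x₁ - 285714, given by x₁ = -(156260x³ + 3627x + 86895)/(3(7x-13)(56x²+104x+31)) and y₁ = -4(13x-6)(214x²+273x+126)y/(9(7x-13)²(56x²+104x+31)²), is well-defined: whenever (x,y) satisfies the equation of C (and the denominators are nonzero), the pair (x₁,y₁) satisfies the equation of E₁. -/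
/-!
Writing `x₁ = X / (3d)` and `y₁ = Y / (9d²)` with `d = (7x - 13)(56x² + 104x + 31)`, the equation
of `E₁` is equivalent, by weighted homogeneity, to `Y² = 3d(X³ + 9·5805·X d² - 27·285714·d³)`.
Since `d` divides the sextic defining `C`, this reduces on `C` to a polynomial identity in `x`
alone.
-/

theorem div_mem_weierstrass_of_sq_eq {K : Type*} [Field K] {a b d X Y : K}
    (h3 : (3 : K) ≠ 0) (hd : d ≠ 0)
    (hY : Y ^ 2 = 3 * d * (X ^ 3 + 9 * a * X * d ^ 2 + 27 * b * d ^ 3)) :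
    (Y / (9 * d ^ 2)) ^ 2 = (X / (3 * d)) ^ 3 + a * (X / (3 * d)) + b := by
  have h9 : (9 : K) ≠ 0 := by simpa [show (9 : K) = 3 ^ 2 by norm_num] using h3
  field_simp
  linear_combination 27 * hY

theorem phi1_polynomial_identity {R : Type*} [CommRing R] (x : R) :
    (4 * (13*x - 6) * (214*x^2 + 273*x + 126)) ^ 2 *
        (-96393 * (13*x + 12) * (107*x^2 - 273*x + 252)) =
      3 * ((-(156260*x^3 + 3627*x + 86895)) ^ 3
        + 9 * 5805 * -(156260*x^3 + 3627*x + 86895) * ((7*x - 13) * (56*x^2 + 104*x + 31)) ^ 2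
        + 27 * -285714 * ((7*x - 13) * (56*x^2 + 104*x + 31)) ^ 3) := by
  ring

/-- The map `φ₁ : C → E₁` is well defined: if `(x, y)` lies on the genus 2 curve
`C : y² = -96393(13x+12)(7x-13)(107x²-273x+252)(56x²+104x+31)` and the denominators
are nonzero, then
`x₁ = -(156260x³ + 3627x + 86895)/(3(7x-13)(56x²+104x+31))`,
`y₁ = -4(13x-6)(214x²+273x+126)y/(9(7x-13)²(56x²+104x+31)²)`
satisfy `y₁² = x₁³ + 5805x₁ - 285714`, the equation of `E₁`. -/
theorem phi1_well_defined (x y : ℚ)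
    (hC : y ^ 2 = -96393 * (13*x + 12) * (7*x - 13) *
      (107*x^2 - 273*x + 252) * (56*x^2 + 104*x + 31))
    (h₁ : 7*x - 13 ≠ 0) (h₂ : 56*x^2 + 104*x + 31 ≠ 0) :
    let x₁ := -(156260*x^3 + 3627*x + 86895) / (3 * (7*x - 13) * (56*x^2 + 104*x + 31))
    let y₁ := -(4 * (13*x - 6) * (214*x^2 + 273*x + 126) * y) /
      (9 * (7*x - 13)^2 * (56*x^2 + 104*x + 31)^2)
    y₁ ^ 2 = x₁ ^ 3 + 5805 * x₁ - 285714 := by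
  intro x₁ y₁
  set d := (7*x - 13) * (56*x^2 + 104*x + 31)
  have hd : d ≠ 0 := mul_ne_zero h₁ h₂
  have hY : (-(4 * (13*x - 6) * (214*x^2 + 273*x + 126) * y)) ^ 2 =
      3 * d * ((-(156260*x^3 + 3627*x + 86895)) ^ 3
        + 9 * 5805 * -(156260*x^3 + 3627*x + 86895) * d ^ 2
        + 27 * -285714 * d ^ 3) := by
    linear_combination (4 * (13*x - 6) * (214*x^2 + 273*x + 126)) ^ 2 * hC
      + d * phi1_polynomial_identity x
  have hE := div_mem_weierstrass_of_sq_eq (a := (5805 : ℚ)) (b := -285714) three_ne_zero hd hY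
  convert hE using 2 <;> ring
end

section
/- The rational map φ₂ from the genus 2 curve C: y² = -96393(13x+12)(7x-13)(107x²-273x+252)(56x²+104x+31) to the elliptic curve E₂': y₂² = x₂³ - 5115x₂ + 115414, given by x₂ = (47485x³ + 4173x² - 211380)/((13x+12)(107x²-273x+252)) and y₂ = -(12(7x+26))(14x²-52x+31)y/((13x+12)²(107x²-273x+252)²), is well-defined: whenever (x,y) satisfies the equation of C, the pair (x₂,y₂) satisfies the equation of E₂'. -/
theorem div_sq_mem_weierstrass_iff {K : Type*} [Field K] {a b N M D : K} (hD : D ≠ 0) :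
    (M / D ^ 2) ^ 2 = (N / D) ^ 3 + a * (N / D) + b ↔
      M ^ 2 = D * (N ^ 3 + a * N * D ^ 2 + b * D ^ 3) := by
  field_simp

theorem phi2_numerator_factorization {R : Type*} [CommRing R] (x : R) :
    (47485*x^3 + 4173*x^2 - 211380) ^ 3
      - 5115 * (47485*x^3 + 4173*x^2 - 211380) * ((13*x + 12) * (107*x^2 - 273*x + 252)) ^ 2
      + 115414 * ((13*x + 12) * (107*x^2 - 273*x + 252)) ^ 3
      = -96393 * (12 * (7*x + 26) * (14*x^2 - 52*x + 31)) ^ 2 *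
          (7*x - 13) * (56*x^2 + 104*x + 31) := by
  ring

/-- The map `φ₂ : C → E₂'` is well defined: if `(x, y)` lies on the genus 2 curve
`C : y² = -96393(13x+12)(7x-13)(107x²-273x+252)(56x²+104x+31)` and the denominators
are nonzero, then
`x₂ = (47485x³ + 4173x² - 211380)/((13x+12)(107x²-273x+252))`,
`y₂ = -(12(7x+26))(14x²-52x+31)y/((13x+12)²(107x²-273x+252)²)`
satisfy `y₂² = x₂³ - 5115x₂ + 115414`, the equation of `E₂'`. -/
theorem phi2_well_defined (x y : ℚ)
    (hC : y ^ 2 = -96393 * (13*x + 12) * (7*x - 13) *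
      (107*x^2 - 273*x + 252) * (56*x^2 + 104*x + 31))
    (h₁ : 13*x + 12 ≠ 0) (h₂ : 107*x^2 - 273*x + 252 ≠ 0) :
    let x₂ := (47485*x^3 + 4173*x^2 - 211380) / ((13*x + 12) * (107*x^2 - 273*x + 252))
    let y₂ := -(12 * (7*x + 26) * (14*x^2 - 52*x + 31) * y) /
      ((13*x + 12)^2 * (107*x^2 - 273*x + 252)^2)
    y₂ ^ 2 = x₂ ^ 3 - 5115 * x₂ + 115414 := by
  have hD : (13*x + 12) * (107*x^2 - 273*x + 252) ≠ 0 := mul_ne_zero h₁ h₂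
  have hE := (div_sq_mem_weierstrass_iff (a := -5115) (b := 115414)
    (N := 47485*x^3 + 4173*x^2 - 211380) (M := -(12 * (7*x + 26) * (14*x^2 - 52*x + 31) * y)) hD).2
    (by linear_combination (12 * (7*x + 26) * (14*x^2 - 52*x + 31)) ^ 2 * hC
      - (13*x + 12) * (107*x^2 - 273*x + 252) * phi2_numerator_factorization x)
  convert hE using 1 <;> ring
end
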